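/- arXiv:1611.01618 — 2 statements merged into one kernel-verified Lean document; each statement's English description precedes it below -/
import Mathlib

section
/- Let r ≥ 1, z ≥ 1 and k ≥ 2 be integers, and let G be a bipartite mixed graph on a finite vertex set V that is totally regular with degrees (r, z), has diameter exactly k, and satisfies (card V : ℝ) = M_B(r, z, k) (a mixed bipartite Moore graph). Then shortest paths of length less than k are unique: for any vertices u, v, if j < k is the least index with (A^j) u v > 0, then (A^j) u v = 1. -/
/-!
Fix a vertex `u` and let `S j` be the set of vertices at distance `j` from `u`. Weighting each
vertex of `S j` by the number of walks of length `j` reaching it, the total weight `W j` obeys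
the Moore-tree recursion `W (j+2) ≤ (d-1) W (j+1) + z W j` with `d = r + z`: a vertex of
`S (j+1)` with an out-neighbour in `S j` has at most `d - 1` out-neighbours in `S (j+2)`, and
the others were entered from `S j` along arcs only, of which there are at most `z` per vertex.
The same holds for the unit weights `#(S j)`, so `#(S j) ≤ W j ≤ N j`, the size of level `j` of
the Moore tree.

In a bipartite graph of diameter `k` the vertices at distance `≢ k (mod 2)` from `u` form one
colour class, of size at most `∑ N j` over the levels `j < k` of that parity, and `M_B(r,z,k)` is
exactly twice this sum. Equality fills those levels; the recursion then fills the levels in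
between, and `#(S j) = W j` says that each vertex of `S j` is reached by exactly one walk of
length `j`.
-/

/-- A mixed graph is given by an adjacency matrix with entries in `{0,1}`
and zero diagonal. -/
def IsMixedGraph {V : Type*} (Adj : Matrix V V ℕ) : Prop :=
  (∀ u v : V, Adj u v ≤ 1) ∧ (∀ u : V, Adj u u = 0)

/-- Totally regular with degrees `(r, z)`: every vertex has `r` neighbors by an edge,
out-degree `z` and in-degree `z` by arcs. -/
def IsTotallyRegular {V : Type*} [Fintype V] (Adj : Matrix V V ℕ) (r z : ℕ) : Prop :=
  ∀ u : V,
    (Finset.univ.filter fun v => Adj u v = 1 ∧ Adj v u = 1).card = r ∧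
    (Finset.univ.filter fun v => Adj u v = 1 ∧ Adj v u = 0).card = z ∧
    (Finset.univ.filter fun v => Adj v u = 1 ∧ Adj u v = 0).card = z

/-- Bipartite mixed graph. -/
def IsBipartiteMixed {V : Type*} (Adj : Matrix V V ℕ) : Prop :=
  ∃ c : V → Bool, ∀ u v : V, Adj u v ≠ 0 → c u ≠ c v

/-- Diameter at most `k`: every ordered pair is joined by a walk of length at most `k`. -/
def DiamAtMost {V : Type*} [Fintype V] [DecidableEq V] (Adj : Matrix V V ℕ) (k : ℕ) : Prop :=
  ∀ u v : V, 0 < (∑ i ∈ Finset.range (k + 1), Adj ^ i) u v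

/-- Diameter exactly `k`. -/
def DiamExactly {V : Type*} [Fintype V] [DecidableEq V] (Adj : Matrix V V ℕ) (k : ℕ) : Prop :=
  DiamAtMost Adj k ∧ ∃ u v : V, (∑ i ∈ Finset.range k, Adj ^ i) u v = 0

/-- The Moore-like bound for bipartite mixed graphs with degrees `(r, z)` and diameter `k`. -/
noncomputable def mooreBoundBip (r z k : ℕ) : ℝ :=
  let d : ℝ := (r : ℝ) + (z : ℝ)
  let v : ℝ := (d - 1)^2 + 4 * (z : ℝ)
  let u₁ : ℝ := (d - 1 - Real.sqrt v) / 2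
  let u₂ : ℝ := (d - 1 + Real.sqrt v) / 2
  let A : ℝ := (Real.sqrt v - (d + 1)) / (2 * Real.sqrt v)
  let B : ℝ := (Real.sqrt v + (d + 1)) / (2 * Real.sqrt v)
  2 * (A * (u₁ ^ (k + 1) - u₁) / (u₁^2 - 1) + B * (u₂ ^ (k + 1) - u₂) / (u₂^2 - 1))

open Finset

/-- Level sizes `N n` of the mixed Moore tree: of the `N (n+1)` vertices on level `n + 1`, the
`z * N n` entered by an arc have `r + z` children, the others `r + z - 1`. -/
def mooreTreeLevel (r z : ℕ) : ℕ → ℕ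
  | 0 => 1
  | 1 => r + z
  | n + 2 => (r + z - 1) * mooreTreeLevel r z (n + 1) + z * mooreTreeLevel r z n

def parityLevels (k : ℕ) : Finset ℕ :=
  (range k).filter fun j => (j + k) % 2 = 1

lemma mem_parityLevels {j k : ℕ} : j ∈ parityLevels k ↔ j < k ∧ (j + k) % 2 = 1 := by
  simp [parityLevels]

lemma parityLevels_add_two (k : ℕ) : parityLevels (k + 2) = insert (k + 1) (parityLevels k) := by
  ext j
  simp only [parityLevels, mem_filter, mem_range, mem_insert]
  omega

lemma succ_notMem_parityLevels (k : ℕ) : k + 1 ∉ parityLevels k := by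
  simp [parityLevels]

lemma sum_parityLevels_add_two {M : Type*} [AddCommMonoid M] (f : ℕ → M) (k : ℕ) :
    ∑ j ∈ parityLevels (k + 2), f j = f (k + 1) + ∑ j ∈ parityLevels k, f j := by
  rw [parityLevels_add_two, sum_insert (succ_notMem_parityLevels k)]

lemma eq_mooreTreeLevel_of_sum_eq {r z k : ℕ} {s : ℕ → ℕ} (hrz : 2 ≤ r + z)
    (hle : ∀ j, s j ≤ mooreTreeLevel r z j) (h₀ : s 0 = 1)
    (hrec : ∀ j, s (j + 2) ≤ (r + z - 1) * s (j + 1) + z * s j)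
    (hsum : ∑ j ∈ parityLevels k, s j = ∑ j ∈ parityLevels k, mooreTreeLevel r z j) :
    ∀ j < k, s j = mooreTreeLevel r z j := by
  have hfull := (sum_eq_sum_iff_of_le fun j _ => hle j).1 hsum
  intro j hj
  by_cases hjk : (j + k) % 2 = 1
  · exact hfull j (mem_parityLevels.2 ⟨hj, hjk⟩)
  obtain _ | i := j
  · exact h₀
  have key : (r + z - 1) * mooreTreeLevel r z (i + 1) + z * mooreTreeLevel r z i ≤
      (r + z - 1) * s (i + 1) + z * mooreTreeLevel r z i :=
    calc _ = s (i + 2) := (hfull (i + 2) (mem_parityLevels.2 (by omega))).symm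
      _ ≤ _ := hrec i
      _ ≤ _ := Nat.add_le_add_left (Nat.mul_le_mul_left _ (hle i)) _
  exact le_antisymm (hle _)
    (Nat.le_of_mul_le_mul_left (Nat.le_of_add_le_add_right key) (by omega))

section MooreBound

variable {r z : ℕ} {u u₁ u₂ a b : ℝ}

lemma mooreTreeLevel_add_two_cast (hrz : 1 ≤ r + z) (n : ℕ) :
    (mooreTreeLevel r z (n + 2) : ℝ) =
      (r + z - 1) * mooreTreeLevel r z (n + 1) + z * mooreTreeLevel r z n := by
  rw [mooreTreeLevel]
  push_cast [Nat.cast_sub hrz]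
  ring

lemma mooreTreeLevel_eq_of_roots (hrz : 1 ≤ r + z) (hsum : u₁ + u₂ = r + z - 1)
    (hprod : u₁ * u₂ = -z) (h₀ : a + b = 1) (h₁ : a * u₁ + b * u₂ = r + z) (n : ℕ) :
    (mooreTreeLevel r z n : ℝ) = a * u₁ ^ n + b * u₂ ^ n := by
  induction n using Nat.twoStepInduction with
  | zero => simpa [mooreTreeLevel] using h₀.symm
  | one => simpa [mooreTreeLevel] using h₁.symm
  | more n ih₀ ih₁ =>
    rw [mooreTreeLevel_add_two_cast hrz, ih₀, ih₁]
    linear_combination (-(a * u₁ ^ (n + 1) + b * u₂ ^ (n + 1))) * hsum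
      + (a * u₁ ^ n + b * u₂ ^ n) * hprod

lemma geom_odd_add_two (hu : u ^ 2 ≠ 1) (k : ℕ) :
    (u ^ (k + 3) - u) / (u ^ 2 - 1) = (u ^ (k + 1) - u) / (u ^ 2 - 1) + u ^ (k + 1) := by
  rw [div_add' _ _ _ (sub_ne_zero.2 hu)]
  ring_nf

lemma sum_parityLevels_eq_of_roots (hrz : 1 ≤ r + z) (hsum : u₁ + u₂ = r + z - 1)
    (hprod : u₁ * u₂ = -z) (h₀ : a + b = 1) (h₁ : a * u₁ + b * u₂ = r + z)
    (hu₁ : u₁ ^ 2 ≠ 1) (hu₂ : u₂ ^ 2 ≠ 1) (k : ℕ) :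
    a * (u₁ ^ (k + 1) - u₁) / (u₁ ^ 2 - 1) + b * (u₂ ^ (k + 1) - u₂) / (u₂ ^ 2 - 1) =
      ∑ j ∈ parityLevels k, (mooreTreeLevel r z j : ℝ) := by
  have hu₁' : u₁ ^ 2 - 1 ≠ 0 := sub_ne_zero.2 hu₁
  have hu₂' : u₂ ^ 2 - 1 ≠ 0 := sub_ne_zero.2 hu₂
  induction k using Nat.twoStepInduction with
  | zero => simp [parityLevels]
  | one =>
    simp only [parityLevels, show (range 1).filter (fun j => (j + 1) % 2 = 1) = {0} by decide,
      sum_singleton, mooreTreeLevel, Nat.cast_one]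
    field_simp
    linear_combination (u₁ - 1) * (u₂ - 1) * (u₁ * u₂ * h₀ + h₁ - hsum)
  | more k ih _ =>
    rw [sum_parityLevels_add_two, ← ih,
      mooreTreeLevel_eq_of_roots hrz hsum hprod h₀ h₁, mul_div_assoc, mul_div_assoc,
      mul_div_assoc, mul_div_assoc, geom_odd_add_two hu₁, geom_odd_add_two hu₂]
    ring

lemma sq_ne_one_of_sq_eq (hr : 1 ≤ r) (hz : 1 ≤ z) (hu : u ^ 2 = (r + z - 1) * u + z) :
    u ^ 2 ≠ 1 := by
  have hr' : (1 : ℝ) ≤ r := by exact_mod_cast hr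
  have hz' : (1 : ℝ) ≤ z := by exact_mod_cast hz
  intro h
  rcases sq_eq_one_iff.1 h with rfl | rfl <;> linarith

lemma mooreBoundBip_eq_two_mul_sum (hr : 1 ≤ r) (hz : 1 ≤ z) (k : ℕ) :
    mooreBoundBip r z k = 2 * ∑ j ∈ parityLevels k, (mooreTreeLevel r z j : ℝ) := by
  have hv : 0 < ((r : ℝ) + z - 1) ^ 2 + 4 * z := by positivity
  have hs2 := Real.sq_sqrt hv.le
  have hs := (Real.sqrt_pos.2 hv).ne'
  simp only [mooreBoundBip]
  generalize √(((r : ℝ) + z - 1) ^ 2 + 4 * z) = s at hs2 hs ⊢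
  rw [sum_parityLevels_eq_of_roots (r := r) (z := z) (by omega) (by ring)
    (by linear_combination (-1 / 4 : ℝ) * hs2) (by field_simp; ring) (by field_simp; ring)
    (sq_ne_one_of_sq_eq hr hz (by linear_combination hs2 / 4))
    (sq_ne_one_of_sq_eq hr hz (by linear_combination hs2 / 4))]

end MooreBound

section Layers

variable {V : Type*} [Fintype V] {A : Matrix V V ℕ} {r z : ℕ}

lemma IsTotallyRegular.sum_row (h01 : ∀ u v, A u v ≤ 1) (hreg : IsTotallyRegular A r z)
    (w : V) : ∑ v, A w v = r + z := by
  have hsplit := card_filter_add_card_filter_not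
    (s := univ.filter fun v => A w v = 1) (p := fun v => A v w = 1)
  simp only [filter_filter] at hsplit
  have hneg : (univ.filter fun v => A w v = 1 ∧ ¬A v w = 1) =
      univ.filter fun v => A w v = 1 ∧ A v w = 0 :=
    filter_congr fun v _ => by have := h01 v w; omega
  rw [hneg, (hreg w).1, (hreg w).2.1] at hsplit
  calc ∑ v, A w v = ∑ v, if A w v = 1 then 1 else 0 :=
        sum_congr rfl fun v _ => by have := h01 w v; split_ifs <;> omega
    _ = r + z := by rw [sum_boole, Nat.cast_id, hsplit]

lemma IsTotallyRegular.sum_arc_le (hreg : IsTotallyRegular A r z) (x : V) (s : Finset V) :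
    ∑ w ∈ s, (if A x w = 1 ∧ A w x = 0 then 1 else 0) ≤ z := by
  rw [sum_boole, Nat.cast_id, ← (hreg x).2.1]
  exact card_le_card (filter_subset_filter _ (subset_univ s))

/-- Either `w` has an out-neighbour in `S₀`, leaving at most `d - 1` for `S₂`, or all of its
weight reached it from `S₀` along arcs. -/
lemma mul_sum_le_of_sum_row_eq [DecidableEq V] {d c : ℕ} (h01 : ∀ u v, A u v ≤ 1)
    {S₀ S₂ : Finset V} (hS : Disjoint S₀ S₂) {w : V} (hrow : ∑ v, A w v = d) {h₀ : V → ℕ}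
    (hc : c ≤ ∑ x ∈ S₀, h₀ x * A x w) :
    c * ∑ v ∈ S₂, A w v ≤
      (d - 1) * c + ∑ x ∈ S₀, h₀ x * (if A x w = 1 ∧ A w x = 0 then 1 else 0) := by
  have hout : ∑ x ∈ S₀, A w x + ∑ v ∈ S₂, A w v ≤ d := by
    rw [← sum_union hS, ← hrow]
    exact sum_le_sum_of_subset (subset_univ _)
  rcases Nat.eq_zero_or_pos (∑ x ∈ S₀, A w x) with hback | hback
  · have harc : ∑ x ∈ S₀, h₀ x * A x w =
        ∑ x ∈ S₀, h₀ x * (if A x w = 1 ∧ A w x = 0 then 1 else 0) := by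
      refine sum_congr rfl fun x hx => ?_
      have hwx := sum_eq_zero_iff.1 hback x hx
      have := h01 x w
      by_cases hxw : A x w = 1
      · simp [hxw, hwx]
      · simp [hxw, hwx]; omega
    calc c * ∑ v ∈ S₂, A w v ≤ c * (d - 1 + 1) := Nat.mul_le_mul_left _ (by omega)
      _ = (d - 1) * c + c := by ring
      _ ≤ _ := Nat.add_le_add_left (harc ▸ hc) _
  · calc c * ∑ v ∈ S₂, A w v ≤ c * (d - 1) := Nat.mul_le_mul_left _ (by omega)
      _ ≤ _ := by rw [mul_comm]; exact Nat.le_add_right _ _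

lemma IsTotallyRegular.sum_le_of_layers [DecidableEq V] (h01 : ∀ u v, A u v ≤ 1)
    (hreg : IsTotallyRegular A r z) {S₀ S₁ S₂ : Finset V} (hS : Disjoint S₀ S₂) {h₀ h₁ h₂ : V → ℕ}
    (h₁_le : ∀ w ∈ S₁, h₁ w ≤ ∑ x ∈ S₀, h₀ x * A x w)
    (h₂_le : ∀ v ∈ S₂, h₂ v ≤ ∑ w ∈ S₁, h₁ w * A w v) :
    ∑ v ∈ S₂, h₂ v ≤ (r + z - 1) * ∑ w ∈ S₁, h₁ w + z * ∑ x ∈ S₀, h₀ x := by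
  calc ∑ v ∈ S₂, h₂ v ≤ ∑ v ∈ S₂, ∑ w ∈ S₁, h₁ w * A w v := sum_le_sum h₂_le
    _ = ∑ w ∈ S₁, h₁ w * ∑ v ∈ S₂, A w v := by rw [sum_comm]; simp_rw [mul_sum]
    _ ≤ ∑ w ∈ S₁, ((r + z - 1) * h₁ w +
          ∑ x ∈ S₀, h₀ x * (if A x w = 1 ∧ A w x = 0 then 1 else 0)) :=
        sum_le_sum fun w hw =>
          mul_sum_le_of_sum_row_eq h01 hS (hreg.sum_row h01 w) (h₁_le w hw)
    _ = (r + z - 1) * ∑ w ∈ S₁, h₁ w +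
          ∑ x ∈ S₀, h₀ x * ∑ w ∈ S₁, (if A x w = 1 ∧ A w x = 0 then 1 else 0) := by
        rw [sum_add_distrib, mul_sum, sum_comm]; simp_rw [mul_sum]
    _ ≤ (r + z - 1) * ∑ w ∈ S₁, h₁ w + ∑ x ∈ S₀, h₀ x * z :=
        Nat.add_le_add_left
          (sum_le_sum fun x _ => Nat.mul_le_mul_left _ (hreg.sum_arc_le x S₁)) _
    _ = _ := by rw [← sum_mul, mul_comm z]

end Layers

section Spheres

variable {V : Type*} [Fintype V] [DecidableEq V] {A : Matrix V V ℕ} {u v w : V} {i j k : ℕ}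

variable (A) in
def sphere (u : V) (j : ℕ) : Finset V :=
  univ.filter fun v => 0 < (A ^ j) u v ∧ ∀ i < j, (A ^ i) u v = 0

lemma mem_sphere : v ∈ sphere A u j ↔ 0 < (A ^ j) u v ∧ ∀ i < j, (A ^ i) u v = 0 := by
  simp [sphere]

lemma eq_of_mem_sphere (hi : v ∈ sphere A u i) (hj : v ∈ sphere A u j) : i = j := by
  rw [mem_sphere] at hi hj
  by_contra hne
  rcases Nat.lt_or_gt_of_ne hne with h | h
  · exact hi.1.ne' (hj.2 i h)
  · exact hj.1.ne' (hi.2 j h)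

lemma disjoint_sphere (h : i ≠ j) : Disjoint (sphere A u i) (sphere A u j) :=
  disjoint_left.2 fun _ hi hj => h (eq_of_mem_sphere hi hj)

lemma sphere_zero : sphere A u 0 = {u} := by
  ext v
  by_cases h : u = v <;> simp [mem_sphere, h, eq_comm]

lemma exists_mem_sphere_of_pow_apply_pos (h : 0 < (A ^ j) u v) :
    ∃ i ≤ j, v ∈ sphere A u i := by
  have hex : ∃ i, 0 < (A ^ i) u v := ⟨j, h⟩
  refine ⟨Nat.find hex, Nat.find_min' hex h, mem_sphere.2 ⟨Nat.find_spec hex, fun i hi => ?_⟩⟩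
  exact Nat.eq_zero_of_not_pos (Nat.find_min hex hi)

lemma exists_mem_sphere_of_diamAtMost (hd : DiamAtMost A k) (u v : V) :
    ∃ j ≤ k, v ∈ sphere A u j := by
  have huv := hd u v
  rw [Matrix.sum_apply] at huv
  obtain ⟨i, hi, hpos⟩ := sum_pos_iff.1 huv
  obtain ⟨j, hj, hv⟩ := exists_mem_sphere_of_pow_apply_pos hpos
  exact ⟨j, hj.trans (Nat.lt_succ_iff.1 (mem_range.1 hi)), hv⟩

lemma pow_succ_apply_pos_iff :
    0 < (A ^ (j + 1)) u v ↔ ∃ w, 0 < (A ^ j) u w ∧ 0 < A w v := by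
  simp [pow_succ, Matrix.mul_apply, sum_pos_iff, CanonicallyOrderedAdd.mul_pos]

lemma mem_sphere_of_pow_apply_pos (hv : v ∈ sphere A u (j + 1)) (hw : 0 < (A ^ j) u w)
    (hwv : 0 < A w v) : w ∈ sphere A u j := by
  refine mem_sphere.2 ⟨hw, fun i hi => Nat.eq_zero_of_not_pos fun hi' => ?_⟩
  have h := pow_succ_apply_pos_iff.2 ⟨w, hi', hwv⟩
  rw [(mem_sphere.1 hv).2 (i + 1) (by omega)] at h
  exact lt_irrefl 0 h

lemma exists_mem_sphere_of_mem_sphere_succ (hv : v ∈ sphere A u (j + 1)) :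
    ∃ w ∈ sphere A u j, 0 < A w v := by
  obtain ⟨w, hw, hwv⟩ := pow_succ_apply_pos_iff.1 (mem_sphere.1 hv).1
  exact ⟨w, mem_sphere_of_pow_apply_pos hv hw hwv, hwv⟩

lemma pow_succ_apply_eq_sum_sphere (hv : v ∈ sphere A u (j + 1)) :
    (A ^ (j + 1)) u v = ∑ w ∈ sphere A u j, (A ^ j) u w * A w v := by
  rw [pow_succ, Matrix.mul_apply]
  refine (sum_subset (subset_univ _) fun w _ hw => ?_).symm
  by_contra hne
  rw [← Ne, ← Nat.pos_iff_ne_zero, CanonicallyOrderedAdd.mul_pos] at hne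
  exact hw (mem_sphere_of_pow_apply_pos hv hne.1 hne.2)

lemma card_sphere_add_two_le (h01 : ∀ u v, A u v ≤ 1) (hreg : IsTotallyRegular A r z) (u : V)
    (j : ℕ) :
    #(sphere A u (j + 2)) ≤ (r + z - 1) * #(sphere A u (j + 1)) + z * #(sphere A u j) := by
  have hin : ∀ i, ∀ w ∈ sphere A u (i + 1), 1 ≤ ∑ x ∈ sphere A u i, 1 * A x w := by
    intro i w hw
    obtain ⟨x, hx, hxw⟩ := exists_mem_sphere_of_mem_sphere_succ hw
    simp only [one_mul]
    exact hxw.trans_le (single_le_sum (f := fun x => A x w) (fun _ _ => Nat.zero_le _) hx)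
  simpa using hreg.sum_le_of_layers h01 (disjoint_sphere (by omega)) (hin j) (hin (j + 1))

lemma sum_pow_sphere_add_two_le (h01 : ∀ u v, A u v ≤ 1) (hreg : IsTotallyRegular A r z)
    (u : V) (j : ℕ) :
    ∑ v ∈ sphere A u (j + 2), (A ^ (j + 2)) u v ≤
      (r + z - 1) * ∑ w ∈ sphere A u (j + 1), (A ^ (j + 1)) u w +
        z * ∑ x ∈ sphere A u j, (A ^ j) u x :=
  hreg.sum_le_of_layers h01 (disjoint_sphere (by omega))
    (fun _ hw => (pow_succ_apply_eq_sum_sphere hw).le)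
    (fun _ hv => (pow_succ_apply_eq_sum_sphere hv).le)

lemma sum_pow_sphere_le_mooreTreeLevel (h01 : ∀ u v, A u v ≤ 1)
    (hreg : IsTotallyRegular A r z) (u : V) (j : ℕ) :
    ∑ v ∈ sphere A u j, (A ^ j) u v ≤ mooreTreeLevel r z j := by
  induction j using Nat.twoStepInduction with
  | zero => simp [sphere_zero, mooreTreeLevel]
  | one =>
    calc ∑ v ∈ sphere A u 1, (A ^ 1) u v ≤ ∑ v, A u v := by
          simpa using sum_le_sum_of_subset (f := A u) (subset_univ (sphere A u 1))
      _ = mooreTreeLevel r z 1 := hreg.sum_row h01 u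
  | more j ih₀ ih₁ =>
    exact (sum_pow_sphere_add_two_le h01 hreg u j).trans
      (Nat.add_le_add (Nat.mul_le_mul_left _ ih₁) (Nat.mul_le_mul_left _ ih₀))

lemma card_sphere_le_sum_pow (u : V) (j : ℕ) :
    #(sphere A u j) ≤ ∑ v ∈ sphere A u j, (A ^ j) u v := by
  rw [card_eq_sum_ones]
  exact sum_le_sum fun v hv => (mem_sphere.1 hv).1

lemma pow_apply_eq_one_of_card_sphere (h01 : ∀ u v, A u v ≤ 1) (hreg : IsTotallyRegular A r z)
    (hcard : #(sphere A u j) = mooreTreeLevel r z j) (hv : v ∈ sphere A u j) :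
    (A ^ j) u v = 1 := by
  have hsum : ∑ v ∈ sphere A u j, 1 = ∑ v ∈ sphere A u j, (A ^ j) u v := by
    rw [← card_eq_sum_ones]
    exact le_antisymm (card_sphere_le_sum_pow u j)
      (hcard ▸ sum_pow_sphere_le_mooreTreeLevel h01 hreg u j)
  exact ((sum_eq_sum_iff_of_le fun v hv => (mem_sphere.1 hv).1).1 hsum v hv).symm

lemma card_sphere_le_mooreTreeLevel (h01 : ∀ u v, A u v ≤ 1) (hreg : IsTotallyRegular A r z)
    (u : V) (j : ℕ) : #(sphere A u j) ≤ mooreTreeLevel r z j :=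
  (card_sphere_le_sum_pow u j).trans (sum_pow_sphere_le_mooreTreeLevel h01 hreg u j)

lemma parity_of_pow_apply_pos {c : V → Bool} (hc : ∀ u v, A u v ≠ 0 → c u ≠ c v)
    (h : 0 < (A ^ j) u v) : c u = c v ↔ j % 2 = 0 := by
  induction j generalizing v with
  | zero =>
    obtain rfl : u = v := by
      by_contra hne
      simp [Matrix.one_apply_ne hne] at h
    simp
  | succ j ih =>
    obtain ⟨w, hw, hwv⟩ := pow_succ_apply_pos_iff.1 h
    have hcw := hc w v hwv.ne'
    rw [show (j + 1) % 2 = 0 ↔ ¬j % 2 = 0 by omega, ← ih hw]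
    revert hcw
    cases c u <;> cases c w <;> cases c v <;> simp

lemma mem_biUnion_sphere_iff (hv : v ∈ sphere A u j) (hj : j ≤ k) :
    v ∈ (parityLevels k).biUnion (sphere A u) ↔ (j + k) % 2 = 1 := by
  rw [mem_biUnion]
  constructor
  · rintro ⟨i, hi, hvi⟩
    exact eq_of_mem_sphere hvi hv ▸ (mem_parityLevels.1 hi).2
  · exact fun h => ⟨j, mem_parityLevels.2 ⟨by omega, h⟩, hv⟩

/-- Walks from `u` and from its out-neighbour `u'` to the same vertex have lengths of opposite
parity. -/
lemma biUnion_sphere_eq_compl {c : V → Bool} (hc : ∀ u v, A u v ≠ 0 → c u ≠ c v)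
    (hd : DiamAtMost A k) {u' : V} (huu' : A u u' ≠ 0) :
    (parityLevels k).biUnion (sphere A u') = ((parityLevels k).biUnion (sphere A u))ᶜ := by
  ext v
  obtain ⟨j, hjk, hj⟩ := exists_mem_sphere_of_diamAtMost hd u v
  obtain ⟨j', hj'k, hj'⟩ := exists_mem_sphere_of_diamAtMost hd u' v
  have hparity : j % 2 = 0 ↔ ¬j' % 2 = 0 := by
    have huu' := hc u u' huu'
    rw [← parity_of_pow_apply_pos hc (mem_sphere.1 hj).1,
      ← parity_of_pow_apply_pos hc (mem_sphere.1 hj').1]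
    revert huu'
    cases c u <;> cases c u' <;> cases c v <;> simp
  rw [mem_compl, mem_biUnion_sphere_iff hj' hj'k, mem_biUnion_sphere_iff hj hjk]
  omega

lemma card_biUnion_sphere (u : V) (k : ℕ) :
    #((parityLevels k).biUnion (sphere A u)) = ∑ j ∈ parityLevels k, #(sphere A u j) :=
  card_biUnion fun _ _ _ _ h => disjoint_sphere h

lemma sum_card_sphere_eq (h01 : ∀ u v, A u v ≤ 1) (hreg : IsTotallyRegular A r z)
    (hrz : 1 ≤ r + z) {c : V → Bool} (hc : ∀ u v, A u v ≠ 0 → c u ≠ c v) (hd : DiamAtMost A k)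
    (hcard : Fintype.card V = 2 * ∑ j ∈ parityLevels k, mooreTreeLevel r z j) (u : V) :
    ∑ j ∈ parityLevels k, #(sphere A u j) = ∑ j ∈ parityLevels k, mooreTreeLevel r z j := by
  have hle (w : V) : #((parityLevels k).biUnion (sphere A w)) ≤
      ∑ j ∈ parityLevels k, mooreTreeLevel r z j := by
    rw [card_biUnion_sphere]
    exact sum_le_sum fun j _ => card_sphere_le_mooreTreeLevel h01 hreg w j
  obtain ⟨u', -, huu'⟩ := exists_ne_zero_of_sum_ne_zero (s := univ) (f := A u)
    (by rw [hreg.sum_row h01 u]; omega)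
  have hcompl := congrArg card (biUnion_sphere_eq_compl hc hd huu')
  rw [card_compl] at hcompl
  have := hle u
  have := hle u'
  rw [← card_biUnion_sphere]
  omega

end Spheres

theorem stmt_16_general {V : Type*} [Fintype V] [DecidableEq V]
    (r z k : ℕ) (hr : 1 ≤ r) (hz : 1 ≤ z)
    (Adj : Matrix V V ℕ)
    (hmixed : IsMixedGraph Adj)
    (hreg : IsTotallyRegular Adj r z)
    (hbip : IsBipartiteMixed Adj)
    (hdiam : DiamExactly Adj k)
    (hcard : (Fintype.card V : ℝ) = mooreBoundBip r z k) :
    ∀ (u v : V) (j : ℕ), j < k → 0 < (Adj ^ j) u v →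
      (∀ i : ℕ, i < j → ¬ 0 < (Adj ^ i) u v) → (Adj ^ j) u v = 1 := by
  intro u v j hj hpos hmin
  obtain ⟨c, hc⟩ := hbip
  have hcardN : Fintype.card V = 2 * ∑ i ∈ parityLevels k, mooreTreeLevel r z i := by
    exact_mod_cast hcard.trans (mooreBoundBip_eq_two_mul_sum hr hz k)
  have hfull : ∀ i < k, #(sphere Adj u i) = mooreTreeLevel r z i :=
    eq_mooreTreeLevel_of_sum_eq (by omega) (card_sphere_le_mooreTreeLevel hmixed.1 hreg u)
      (by simp [sphere_zero]) (card_sphere_add_two_le hmixed.1 hreg u)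
      (sum_card_sphere_eq hmixed.1 hreg (by omega) hc hdiam.1 hcardN u)
  exact pow_apply_eq_one_of_card_sphere hmixed.1 hreg (hfull j hj)
    (mem_sphere.2 ⟨hpos, fun i hi => Nat.eq_zero_of_not_pos (hmin i hi)⟩)

theorem stmt_16 {V : Type*} [Fintype V] [DecidableEq V] [Nonempty V]
    (r z k : ℕ) (hr : 1 ≤ r) (hz : 1 ≤ z) (hk : 2 ≤ k)
    (Adj : Matrix V V ℕ)
    (hmixed : IsMixedGraph Adj)
    (hreg : IsTotallyRegular Adj r z)
    (hbip : IsBipartiteMixed Adj)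
    (hdiam : DiamExactly Adj k)
    (hcard : (Fintype.card V : ℝ) = mooreBoundBip r z k) :
    ∀ (u v : V) (j : ℕ), j < k → 0 < (Adj ^ j) u v →
      (∀ i : ℕ, i < j → ¬ 0 < (Adj ^ i) u v) → (Adj ^ j) u v = 1 :=
  stmt_16_general r z k hr hz Adj hmixed hreg hbip hdiam hcard
end

section
/- For every prime power q, setting d = q + 1, there exists a bipartite mixed graph on a finite vertex set V that is totally regular with degrees (1, q), has diameter exactly 4, and has card V = 2(q+1)(q² + q + 1) = 2d·((d−1)³ − 1)/(d−2) vertices. -/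
/-!
Take a projective plane of order `q` (for a prime power `q`, the Desarguesian plane over
`GF(q)`) and two copies of its set of flags `(p, l)`. From a flag of the first copy one may step
to any flag of the second copy with the same point, and from a flag of the second copy to any
flag of the first copy with the same line. A flag and its twin are joined both ways (one edge),
while the `q` other lines through `p`, respectively the `q` other points on `l`, give `q`
out-arcs and, symmetrically, `q` in-arcs. The graph is bipartite with the two copies as classes.
Two flags in different copies are joined by a walk of length 3 through the line joining their
points (or the point common to their lines); prolonging by an edge gives walks of length 4
within a copy. Conversely, for flags `(p, l)` and `(p', l')` of the first copy with `p ∉ l'`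
there is no walk of length at most 3: the odd lengths are excluded by bipartiteness, and a walk
of length 2 would put `p` on `l'`.
-/

namespace Matrix

variable {V : Type*} [Fintype V] [DecidableEq V]

theorem pow_succ_apply_pos_iff (A : Matrix V V ℕ) (i : ℕ) (u v : V) :
    0 < (A ^ (i + 1)) u v ↔ ∃ w, 0 < (A ^ i) u w ∧ 0 < A w v := by
  simp [pow_succ, mul_apply, Finset.sum_pos_iff]

theorem sum_range_pow_apply_pos_iff (A : Matrix V V ℕ) (k : ℕ) (u v : V) :
    0 < (∑ i ∈ Finset.range k, A ^ i) u v ↔ ∃ i < k, 0 < (A ^ i) u v := by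
  simp [sum_apply, Finset.sum_pos_iff]

theorem eq_iff_even_of_pow_apply_pos {A : Matrix V V ℕ} {c : V → Bool}
    (hc : ∀ u v, A u v ≠ 0 → c u ≠ c v) {i : ℕ} {u v : V} (h : 0 < (A ^ i) u v) :
    c u = c v ↔ Even i := by
  induction i generalizing v with
  | zero =>
    obtain rfl : u = v := by
      by_contra huv
      simp [one_apply_ne huv] at h
    simp
  | succ i ih =>
    obtain ⟨w, huw, hwv⟩ := (pow_succ_apply_pos_iff A i u v).1 h
    have hv : c v = !c w := Bool.eq_not_of_ne (hc w v hwv.ne').symm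
    rw [Nat.even_add_one, ← ih huw, hv]
    cases c u <;> cases c w <;> simp

end Matrix

section Reindex

variable {V W : Type*} (e : V ≃ W)

theorem IsMixedGraph.reindex {A : Matrix V V ℕ} (h : IsMixedGraph A) :
    IsMixedGraph (A.reindex e e) :=
  ⟨fun _ _ => h.1 _ _, fun _ => h.2 _⟩

theorem IsBipartiteMixed.reindex {A : Matrix V V ℕ} (h : IsBipartiteMixed A) :
    IsBipartiteMixed (A.reindex e e) :=
  let ⟨c, hc⟩ := h
  ⟨c ∘ e.symm, fun _ _ huv => hc _ _ huv⟩

variable [Fintype V] [Fintype W]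

theorem IsTotallyRegular.reindex {A : Matrix V V ℕ} {r z : ℕ} (h : IsTotallyRegular A r z) :
    IsTotallyRegular (A.reindex e e) r z := by
  intro u
  obtain ⟨hr, hout, hin⟩ := h (e.symm u)
  refine ⟨.trans ?_ hr, .trans ?_ hout, .trans ?_ hin⟩ <;>
    exact Finset.card_equiv e.symm fun _ => by simp only [Finset.mem_filter, Finset.mem_univ]; rfl

variable [DecidableEq V] [DecidableEq W]

theorem Matrix.reindex_pow {R : Type*} [Semiring R] (A : Matrix V V R) (i : ℕ) :
    A.reindex e e ^ i = (A ^ i).reindex e e := by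
  simpa using (map_pow (Matrix.reindexAlgEquiv ℕ R e) A i).symm

theorem DiamExactly.reindex {A : Matrix V V ℕ} {k : ℕ} (h : DiamExactly A k) :
    DiamExactly (A.reindex e e) k := by
  obtain ⟨hdiam, u, v, huv⟩ := h
  refine ⟨fun u v => ?_, e u, e v, ?_⟩
  · simp only [Matrix.sum_apply, Matrix.reindex_pow]
    simpa [Matrix.sum_apply] using hdiam (e.symm u) (e.symm v)
  · simp only [Matrix.sum_apply, Matrix.reindex_pow]
    simpa [Matrix.sum_apply] using huv

end Reindex

namespace Configuration

variable (P L : Type*) [Membership P L]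

abbrev Flag : Type _ := {x : P × L // x.1 ∈ x.2}

def FlagArc : Bool × Flag P L → Bool × Flag P L → Prop
  | (false, f), (b, g) => b = true ∧ f.1.1 = g.1.1
  | (true, f), (b, g) => b = false ∧ f.1.2 = g.1.2

open Classical in
noncomputable def flagGraph : Matrix (Bool × Flag P L) (Bool × Flag P L) ℕ :=
  Matrix.of fun u v => if FlagArc P L u v then 1 else 0

def flagSwap : Equiv.Perm (Bool × Flag P L) :=
  Equiv.prodCongr Equiv.boolNot (Equiv.refl _)

variable {P L}

@[simp]
theorem flagSwap_apply (u : Bool × Flag P L) : flagSwap P L u = (!u.1, u.2) := rfl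

@[simp]
theorem flagGraph_apply_eq_one_iff {u v : Bool × Flag P L} :
    flagGraph P L u v = 1 ↔ FlagArc P L u v := by
  simp [flagGraph]

@[simp]
theorem flagGraph_apply_eq_zero_iff {u v : Bool × Flag P L} :
    flagGraph P L u v = 0 ↔ ¬ FlagArc P L u v := by
  simp [flagGraph]

@[simp]
theorem flagGraph_apply_pos_iff {u v : Bool × Flag P L} :
    0 < flagGraph P L u v ↔ FlagArc P L u v := by
  rw [Nat.pos_iff_ne_zero, Ne, flagGraph_apply_eq_zero_iff, not_not]

theorem FlagArc.fst_ne {u v : Bool × Flag P L} (h : FlagArc P L u v) : u.1 ≠ v.1 := by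
  rcases u with ⟨_ | _, _⟩ <;> rcases v with ⟨_ | _, _⟩ <;> simp_all [FlagArc]

theorem flagArc_flagSwap_iff {u v : Bool × Flag P L} :
    FlagArc P L (flagSwap P L v) (flagSwap P L u) ↔ FlagArc P L u v := by
  rcases u with ⟨_ | _, _⟩ <;> rcases v with ⟨_ | _, _⟩ <;> simp [FlagArc, eq_comm]

theorem flagArc_and_flagArc_iff {u v : Bool × Flag P L} :
    FlagArc P L u v ∧ FlagArc P L v u ↔ v = flagSwap P L u := by
  rcases u with ⟨_ | _, ⟨⟨p, l⟩, _⟩⟩ <;> rcases v with ⟨_ | _, ⟨⟨p', l'⟩, _⟩⟩ <;>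
    simp [FlagArc, eq_comm, and_comm]

theorem isMixedGraph_flagGraph : IsMixedGraph (flagGraph P L) :=
  ⟨fun u v => by by_cases h : FlagArc P L u v <;> simp [flagGraph, h],
    fun u => flagGraph_apply_eq_zero_iff.2 fun h => h.fst_ne rfl⟩

theorem fst_ne_of_flagGraph_apply_ne_zero {u v : Bool × Flag P L} (h : flagGraph P L u v ≠ 0) :
    u.1 ≠ v.1 :=
  (flagGraph_apply_pos_iff.1 (Nat.pos_of_ne_zero h)).fst_ne

theorem isBipartiteMixed_flagGraph : IsBipartiteMixed (flagGraph P L) :=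
  ⟨Prod.fst, fun _ _ => fst_ne_of_flagGraph_apply_ne_zero⟩

section ProjectivePlane

open ProjectivePlane Classical

variable [ProjectivePlane P L] [Fintype P] [Fintype L]

theorem card_filter_lines_through_ne {p : P} {l : L} (hpl : p ∈ l) :
    (Finset.univ.filter fun m : L => p ∈ m ∧ m ≠ l).card = order P L := by
  have hcount : (Finset.univ.filter fun m : L => p ∈ m).card = order P L + 1 := by
    rw [← lineCount_eq L p, lineCount, Nat.card_eq_fintype_card, Fintype.card_subtype]
  have herase : (Finset.univ.filter fun m : L => p ∈ m ∧ m ≠ l)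
      = (Finset.univ.filter fun m : L => p ∈ m).erase l := by
    ext; simp [and_comm]
  rw [herase, Finset.card_erase_of_mem (by simpa), hcount, Nat.add_sub_cancel]

theorem card_filter_points_on_ne {p : P} {l : L} (hpl : p ∈ l) :
    (Finset.univ.filter fun x : P => x ∈ l ∧ x ≠ p).card = order P L := by
  have hcount : (Finset.univ.filter fun x : P => x ∈ l).card = order P L + 1 := by
    rw [← pointCount_eq P l, pointCount, Nat.card_eq_fintype_card, Fintype.card_subtype]
  have herase : (Finset.univ.filter fun x : P => x ∈ l ∧ x ≠ p)
      = (Finset.univ.filter fun x : P => x ∈ l).erase p := by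
    ext; simp [and_comm]
  rw [herase, Finset.card_erase_of_mem (by simpa), hcount, Nat.add_sub_cancel]

theorem card_filter_flagArc_not_flagArc (u : Bool × Flag P L) :
    (Finset.univ.filter fun v => FlagArc P L u v ∧ ¬ FlagArc P L v u).card = order P L := by
  rcases u with ⟨_ | _, ⟨⟨p, l⟩, hpl⟩⟩
  · rw [← card_filter_lines_through_ne hpl]
    refine Finset.card_bij' (fun v _ => v.2.1.2)
      (fun m hm => (true, ⟨(p, m), (Finset.mem_filter.1 hm).2.1⟩)) ?_ ?_ ?_ ?_
    all_goals simp only [Finset.mem_filter, Finset.mem_univ, true_and]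
    · rintro ⟨_ | _, ⟨⟨p', m⟩, h⟩⟩ hv <;> simp_all [FlagArc]
    · intro m hm; simp_all [FlagArc]
    · rintro ⟨_ | _, ⟨⟨p', m⟩, h⟩⟩ ⟨h1, h2⟩ <;> simp only [FlagArc] at h1 h2 ⊢ <;> simp_all
    · simp
  · rw [← card_filter_points_on_ne hpl]
    refine Finset.card_bij' (fun v _ => v.2.1.1)
      (fun x hx => (false, ⟨(x, l), (Finset.mem_filter.1 hx).2.1⟩)) ?_ ?_ ?_ ?_
    all_goals simp only [Finset.mem_filter, Finset.mem_univ, true_and]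
    · rintro ⟨_ | _, ⟨⟨p', m⟩, h⟩⟩ hv <;> simp_all [FlagArc]
    · intro m hm; simp_all [FlagArc]
    · rintro ⟨_ | _, ⟨⟨p', m⟩, h⟩⟩ ⟨h1, h2⟩ <;> simp only [FlagArc] at h1 h2 ⊢ <;> simp_all
    · simp

theorem isTotallyRegular_flagGraph : IsTotallyRegular (flagGraph P L) 1 (order P L) := by
  intro u
  refine ⟨?_, ?_, ?_⟩
  · simp only [flagGraph_apply_eq_one_iff, flagArc_and_flagArc_iff, Finset.filter_eq',
      Finset.mem_univ, if_true, Finset.card_singleton]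
  · simpa only [flagGraph_apply_eq_one_iff, flagGraph_apply_eq_zero_iff]
      using card_filter_flagArc_not_flagArc u
  · rw [← card_filter_flagArc_not_flagArc (flagSwap P L u)]
    refine Finset.card_equiv (flagSwap P L) fun v => ?_
    simp only [Finset.mem_filter, Finset.mem_univ, true_and, flagGraph_apply_eq_one_iff,
      flagGraph_apply_eq_zero_iff, flagArc_flagSwap_iff]

theorem flagGraph_pow_three_apply_pos {u v : Bool × Flag P L} (huv : u.1 ≠ v.1) :
    0 < (flagGraph P L ^ 3) u v := by
  rcases u with ⟨_ | _, ⟨⟨p, l⟩, hpl⟩⟩ <;> rcases v with ⟨_ | _, ⟨⟨p', l'⟩, hpl'⟩⟩ <;>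
    simp only [ne_eq, not_true_eq_false] at huv
  · obtain ⟨n, hpn, hp'n⟩ : ∃ n : L, p ∈ n ∧ p' ∈ n := by
      rcases eq_or_ne p p' with rfl | hpp'
      exacts [⟨l, hpl, hpl⟩, ⟨_, HasLines.mkLine_ax hpp'⟩]
    refine (Matrix.pow_succ_apply_pos_iff _ 2 _ _).2 ⟨(false, ⟨(p', n), hp'n⟩),
      (Matrix.pow_succ_apply_pos_iff _ 1 _ _).2 ⟨(true, ⟨(p, n), hpn⟩), ?_, ?_⟩, ?_⟩ <;>
      simp [FlagArc]
  · obtain ⟨x, hxl, hxl'⟩ : ∃ x : P, x ∈ l ∧ x ∈ l' := by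
      rcases eq_or_ne l l' with rfl | hll'
      exacts [⟨p, hpl, hpl⟩, ⟨_, HasPoints.mkPoint_ax hll'⟩]
    refine (Matrix.pow_succ_apply_pos_iff _ 2 _ _).2 ⟨(true, ⟨(x, l'), hxl'⟩),
      (Matrix.pow_succ_apply_pos_iff _ 1 _ _).2 ⟨(false, ⟨(x, l), hxl⟩), ?_, ?_⟩, ?_⟩ <;>
      simp [FlagArc]

theorem flagGraph_pow_four_apply_pos {u v : Bool × Flag P L} (huv : u.1 = v.1) :
    0 < (flagGraph P L ^ 4) u v :=
  (Matrix.pow_succ_apply_pos_iff _ 3 _ _).2 ⟨flagSwap P L v,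
    flagGraph_pow_three_apply_pos (by simp [huv]),
    flagGraph_apply_pos_iff.2 (flagArc_and_flagArc_iff.2 rfl).2⟩

theorem diamAtMost_flagGraph : DiamAtMost (flagGraph P L) 4 := by
  intro u v
  rw [Matrix.sum_range_pow_apply_pos_iff]
  by_cases huv : u.1 = v.1
  exacts [⟨4, by norm_num, flagGraph_pow_four_apply_pos huv⟩,
    ⟨3, by norm_num, flagGraph_pow_three_apply_pos huv⟩]

theorem exists_flagGraph_sum_range_four_apply_eq_zero :
    ∃ u v, (∑ i ∈ Finset.range 4, flagGraph P L ^ i) u v = 0 := by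
  obtain ⟨-, p₂, p₃, -, l₂, l₃, -, -, -, -, hp₂l₃, -, hp₃l₂, hp₃l₃⟩ := exists_config (P := P) (L := L)
  refine ⟨(false, ⟨(p₃, l₂), hp₃l₂⟩), (false, ⟨(p₂, l₃), hp₂l₃⟩), ?_⟩
  rw [← Nat.le_zero, ← not_lt, Matrix.sum_range_pow_apply_pos_iff]
  rintro ⟨i, hi, hpos⟩
  have heven : Even i :=
    (Matrix.eq_iff_even_of_pow_apply_pos (A := flagGraph P L)
      (fun _ _ => fst_ne_of_flagGraph_apply_ne_zero) hpos).1 rfl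
  interval_cases i
  · obtain ⟨rfl, rfl⟩ : p₃ = p₂ ∧ l₂ = l₃ := by
      simpa [Matrix.one_apply, Nat.pos_iff_ne_zero] using hpos
    exact hp₃l₃ hp₂l₃
  · exact absurd heven (by decide)
  · obtain ⟨⟨_ | _, ⟨⟨x, m⟩, hxm⟩⟩, h₁, h₂⟩ := (Matrix.pow_succ_apply_pos_iff _ 1 _ _).1 hpos
    · simp [FlagArc] at h₁ h₂
    · simp only [pow_one, flagGraph_apply_pos_iff, FlagArc, true_and] at h₁ h₂
      exact hp₃l₃ (h₁ ▸ h₂ ▸ hxm)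
  · exact absurd heven (by decide)

theorem card_flag : Fintype.card (Flag P L) = (order P L ^ 2 + order P L + 1) * (order P L + 1) := by
  have hfibre (p : P) : Fintype.card {l : L // p ∈ l} = order P L + 1 := by
    rw [← Nat.card_eq_fintype_card, ← lineCount, lineCount_eq]
  rw [Fintype.card_congr (Equiv.subtypeProdEquivSigmaSubtype fun (p : P) (l : L) => p ∈ l),
    Fintype.card_sigma, Finset.sum_congr rfl fun p _ => hfibre p, Finset.sum_const,
    Finset.card_univ, card_points P L, smul_eq_mul]

theorem exists_mixedGraph_of_order_eq {q : ℕ} (hq : order P L = q) :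
    ∃ Adj : Matrix (Fin (2 * (q + 1) * (q ^ 2 + q + 1))) (Fin (2 * (q + 1) * (q ^ 2 + q + 1))) ℕ,
      IsMixedGraph Adj ∧ IsTotallyRegular Adj 1 q ∧ IsBipartiteMixed Adj ∧ DiamExactly Adj 4 := by
  subst hq
  have hcard : Fintype.card (Bool × Flag P L)
      = 2 * (order P L + 1) * (order P L ^ 2 + order P L + 1) := by
    rw [Fintype.card_prod, Fintype.card_bool, card_flag]; ring
  let e := Fintype.equivFinOfCardEq hcard
  exact ⟨(flagGraph P L).reindex e e, isMixedGraph_flagGraph.reindex e,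
    isTotallyRegular_flagGraph.reindex e, isBipartiteMixed_flagGraph.reindex e,
    DiamExactly.reindex e ⟨diamAtMost_flagGraph, exists_flagGraph_sum_range_four_apply_eq_zero⟩⟩

end ProjectivePlane

end Configuration

namespace Configuration.ofField

open scoped LinearAlgebra.Projectivization

variable (K : Type*) [Field K] [Fintype K] [DecidableEq K]

theorem order_eq_card :
    ProjectivePlane.order (ℙ K (Fin 3 → K)) (ℙ K (Fin 3 → K)) = Fintype.card K := by
  have : Fintype (ℙ K (Fin 3 → K)) := Fintype.ofFinite _
  have hcard := Projectivization.card_of_finrank K (Fin 3 → K) (Module.finrank_fin_fun K)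
  rw [Nat.card_eq_fintype_card, ProjectivePlane.card_points (ℙ K (Fin 3 → K)) (ℙ K (Fin 3 → K)),
    Nat.card_eq_fintype_card] at hcard
  simp only [Finset.sum_range_succ, Finset.sum_range_zero, pow_zero, pow_one, zero_add] at hcard
  apply le_antisymm <;> nlinarith

end Configuration.ofField

theorem Nat.mul_pow_three_sub_one_div {q : ℕ} (hq : 1 < q) (a : ℕ) :
    a * (q ^ 3 - 1) / (q - 1) = a * (q ^ 2 + q + 1) := by
  have hfactor : q ^ 3 - 1 = (q ^ 2 + q + 1) * (q - 1) := by
    obtain ⟨m, rfl⟩ : ∃ m, q = m + 1 := ⟨q - 1, by omega⟩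
    rw [Nat.add_sub_cancel, Nat.sub_eq_of_eq_add]
    ring
  rw [hfactor, ← mul_assoc, Nat.mul_div_cancel _ (by omega)]

theorem stmt_18 (q : ℕ) (hq : ∃ p n : ℕ, p.Prime ∧ 0 < n ∧ q = p ^ n) :
    (∃ Adj : Matrix (Fin (2 * (q + 1) * (q^2 + q + 1))) (Fin (2 * (q + 1) * (q^2 + q + 1))) ℕ,
      IsMixedGraph Adj ∧ IsTotallyRegular Adj 1 q ∧ IsBipartiteMixed Adj ∧
      DiamExactly Adj 4) ∧
    2 * (q + 1) * (q^2 + q + 1) = 2 * (q + 1) * (((q + 1) - 1)^3 - 1) / ((q + 1) - 2) := by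
  obtain ⟨p, n, hp, hn, hqpn⟩ := hq
  have : Fact p.Prime := ⟨hp⟩
  let K := GaloisField p n
  have : Fintype K := Fintype.ofFinite K
  classical
  let Pl := Projectivization K (Fin 3 → K)
  have : Fintype Pl := Fintype.ofFinite Pl
  have horder : Configuration.ProjectivePlane.order Pl Pl = q := by
    rw [Configuration.ofField.order_eq_card, ← Nat.card_eq_fintype_card, GaloisField.card p n hn.ne',
      hqpn]
  have hq : 1 < q := horder ▸ Configuration.ProjectivePlane.one_lt_order Pl Pl
  refine ⟨Configuration.exists_mixedGraph_of_order_eq horder, ?_⟩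
  rw [show q + 1 - 2 = q - 1 by omega, Nat.add_sub_cancel, Nat.mul_pow_three_sub_one_div hq]
end
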